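/- Let f be a ϑ-self-concordant barrier on D_f ⊆ R_{>0}^n with gradient g, K = 4ϑ+1, and suppose x ∈ D_f satisfies x + (K+1)x_i e_i ∈ D_f for all i. Then all components of the gradient g(x) are negative, i.e., g_i(x) < 0 for all i ∈ [n]. -/

import Mathlib

/-- Local quadratic form `v ↦ vᵀ H v` induced by a Hessian matrix `H`. -/
noncomputable def quadForm {n : ℕ} (H : Matrix (Fin n) (Fin n) ℝ) (v : Fin n → ℝ) : ℝ :=
  dotProduct v (H.mulVec v)

/-!
Suppose `g x i ≥ 0` and put `y = x + (K + 1) xᵢ eᵢ`, so that `⟪g x, y - x⟫ ≥ 0`. Along the segment,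
`χ t = ⟪g (x + t (y - x)), y - x⟫` has derivative `ψ t = ‖y - x‖²` in the local norm at
`x + t (y - x)`, and Cauchy–Schwarz against the Newton step `H⁻¹ g` gives `χ² ≤ ϑ ψ`. With
`r = ‖y - x‖ₓ`, the Dikin ellipsoid bound on the Hessian lifts `χ` to at least `7r/24` by time
`1/(2r)`; from then on `χ` is a supersolution of the Riccati equation `χ' = χ² / ϑ`, which blows up
before time `1` unless `r < 4ϑ + 1 = K`. On the other hand, the Dikin ellipsoid at `x` stays in the
positive orthant, so `xᵢ² Hᵢᵢ ≥ 1` and `r ≥ K + 1`.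
-/

open Set Matrix

section QuadForm

variable {n : ℕ} {M : Matrix (Fin n) (Fin n) ℝ}

lemma quadForm_nonneg (hM : M.PosSemidef) (v : Fin n → ℝ) : 0 ≤ quadForm M v := by
  simpa [quadForm] using hM.dotProduct_mulVec_nonneg v

lemma quadForm_pos (hM : M.PosDef) {v : Fin n → ℝ} (hv : v ≠ 0) : 0 < quadForm M v := by
  simpa [quadForm] using hM.dotProduct_mulVec_pos hv

lemma quadForm_smul (M : Matrix (Fin n) (Fin n) ℝ) (t : ℝ) (v : Fin n → ℝ) :
    quadForm M (t • v) = t ^ 2 * quadForm M v := by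
  simp only [quadForm, mulVec_smul, dotProduct_smul, smul_dotProduct, smul_eq_mul]
  ring

lemma sq_dotProduct_le_quadForm_mul_quadForm_inv (hM : M.PosDef) (v w : Fin n → ℝ) :
    (w ⬝ᵥ v) ^ 2 ≤ quadForm M v * quadForm M (M⁻¹ *ᵥ w) := by
  set u := M⁻¹ *ᵥ w
  have hMu : M *ᵥ u = w := by
    rw [mulVec_mulVec, mul_nonsing_inv _ ((isUnit_iff_isUnit_det M).1 hM.isUnit), one_mulVec]
  have hsymm : u ⬝ᵥ M *ᵥ v = v ⬝ᵥ w := by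
    have hMt : Mᵀ = M := by rw [← conjTranspose_eq_transpose_of_trivial]; exact hM.isHermitian
    rw [dotProduct_mulVec, ← mulVec_transpose, hMt, dotProduct_comm, hMu]
  have hCS := (toBilin' M).apply_mul_apply_le_of_forall_zero_le
    (fun z => by rw [toBilin'_apply']; exact quadForm_nonneg hM.posSemidef z) v u
  simp only [toBilin'_apply', hsymm] at hCS
  simpa [sq, quadForm, hMu, dotProduct_comm w v] using hCS

lemma one_le_quadForm_smul_single {x : Fin n → ℝ} (i : Fin n)
    (hball : ∀ y, quadForm M (y - x) < 1 → 0 < y i) :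
    1 ≤ quadForm M (x i • Pi.single i 1) := by
  by_contra! h
  have hy := hball (x - x i • Pi.single i 1)
    (by rwa [sub_sub_cancel_left, ← neg_one_smul ℝ, quadForm_smul, neg_one_sq, one_mul])
  simp at hy

end QuadForm

lemma hasDerivAt_comp_add_smul_of_fderiv_ne_zero {E : Type*} [NormedAddCommGroup E]
    [NormedSpace ℝ E] {φ : E → ℝ} {x v : E} {t : ℝ} (h : fderiv ℝ φ (x + t • v) v ≠ 0) :
    HasDerivAt (fun s : ℝ => φ (x + s • v)) (fderiv ℝ φ (x + t • v) v) t := by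
  have hφ : DifferentiableAt ℝ φ (x + t • v) := by
    by_contra hnd
    simp [fderiv_zero_of_not_differentiableAt hnd] at h
  have hline : HasDerivAt (fun s : ℝ => x + s • v) v t := by
    simpa using ((hasDerivAt_id t).smul_const v).const_add x
  exact hφ.hasFDerivAt.comp_hasDerivAt t hline

section Interval

variable {χ ψ : ℝ → ℝ}

lemma monotoneOn_Icc_of_hasDerivAt_nonneg {a b : ℝ} (hχ : ∀ t ∈ Icc a b, HasDerivAt χ (ψ t) t)
    (hψ : ∀ t ∈ Icc a b, 0 ≤ ψ t) : MonotoneOn χ (Icc a b) :=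
  monotoneOn_of_hasDerivWithinAt_nonneg (convex_Icc a b)
    (fun t ht => (hχ t ht).continuousAt.continuousWithinAt)
    (fun t ht => (hχ t (interior_subset ht)).hasDerivWithinAt)
    (fun t ht => hψ t (interior_subset ht))

lemma antitoneOn_Icc_of_hasDerivAt_nonpos {a b : ℝ} (hχ : ∀ t ∈ Icc a b, HasDerivAt χ (ψ t) t)
    (hψ : ∀ t ∈ Icc a b, ψ t ≤ 0) : AntitoneOn χ (Icc a b) :=
  antitoneOn_of_hasDerivWithinAt_nonpos (convex_Icc a b)
    (fun t ht => (hχ t ht).continuousAt.continuousWithinAt)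
    (fun t ht => (hχ t (interior_subset ht)).hasDerivWithinAt)
    (fun t ht => hψ t (interior_subset ht))

/-- Comparison with `χ' = χ² / θ`, whose solution starting from `χ a` blows up at `a + θ / χ a`. -/
lemma mul_sub_lt_of_sq_le_mul_deriv {θ a b : ℝ} (hθ : 0 ≤ θ) (hab : a ≤ b)
    (hχ : ∀ t ∈ Icc a b, HasDerivAt χ (ψ t) t) (hsq : ∀ t ∈ Icc a b, χ t ^ 2 ≤ θ * ψ t)
    (ha : 0 < χ a) : χ a * (b - a) < θ := by
  have haI : a ∈ Icc a b := left_mem_Icc.2 hab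
  have hbI : b ∈ Icc a b := right_mem_Icc.2 hab
  have hθpos : 0 < θ := by
    refine hθ.lt_of_ne fun h => ?_
    have hsqa := hsq a haI
    rw [← h, zero_mul] at hsqa
    nlinarith
  have hψ : ∀ t ∈ Icc a b, 0 ≤ ψ t := fun t ht =>
    nonneg_of_mul_nonneg_right ((sq_nonneg _).trans (hsq t ht)) hθpos
  have hpos : ∀ t ∈ Icc a b, 0 < χ t := fun t ht =>
    ha.trans_le (monotoneOn_Icc_of_hasDerivAt_nonneg hχ hψ haI ht ht.1)
  have hanti : AntitoneOn (fun t => (χ t)⁻¹ + t / θ) (Icc a b) := by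
    refine antitoneOn_Icc_of_hasDerivAt_nonpos
      (fun t ht => ((hχ t ht).inv (hpos t ht).ne').add ((hasDerivAt_id t).div_const θ))
      (fun t ht => ?_)
    have hχt := hpos t ht
    rw [neg_div, neg_add_nonpos_iff, div_le_div_iff₀ hθpos (by positivity)]
    simpa [mul_comm] using hsq t ht
  have hend : (χ b)⁻¹ + b / θ ≤ (χ a)⁻¹ + a / θ := hanti haI hbI hab
  have hb := inv_pos.2 (hpos b hbI)
  have hgap : (b - a) / θ < (χ a)⁻¹ := by rw [sub_div]; linarith
  rwa [div_lt_iff₀ hθpos, inv_mul_eq_div, lt_div_iff₀ ha, mul_comm] at hgap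

/-- The constant is `∫₀^{1/(2r)} r² (1 - t r)² dt = 7 r / 24`. -/
lemma seven_mul_div_le_of_sq_mul_one_sub_sq_le_deriv {r : ℝ} (hr : 0 < r) (h0 : 0 ≤ χ 0)
    (hχ : ∀ t ∈ Icc 0 (1 / (2 * r)), HasDerivAt χ (ψ t) t)
    (hψ : ∀ t ∈ Icc 0 (1 / (2 * r)), r ^ 2 * (1 - t * r) ^ 2 ≤ ψ t) :
    7 * r / 24 ≤ χ (1 / (2 * r)) := by
  set P : ℝ → ℝ := fun t => r / 3 * (1 - (1 - t * r) ^ 3)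
  have hP : ∀ t, HasDerivAt P (r ^ 2 * (1 - t * r) ^ 2) t := fun t => by
    have hline : HasDerivAt (fun s => 1 - s * r) (-r) t := by
      simpa using ((hasDerivAt_id t).mul_const r).const_sub 1
    exact (((hasDerivAt_pow 3 _).comp t hline).const_sub 1 |>.const_mul (r / 3)).congr_deriv
      (by ring)
  have hmono := monotoneOn_Icc_of_hasDerivAt_nonneg (fun t ht => (hχ t ht).sub (hP t))
    (fun t ht => sub_nonneg.2 (hψ t ht))
  have hends := hmono (left_mem_Icc.2 (by positivity)) (right_mem_Icc.2 (by positivity))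
    (by positivity)
  have hPt : P (1 / (2 * r)) = 7 * r / 24 := by
    simp only [P]; field_simp; ring
  have hP0 : P 0 = 0 := by simp [P]
  simp only [Pi.sub_apply, hPt, hP0] at hends
  linarith

lemma lt_four_mul_add_one_of_sq_le_mul_deriv {θ r : ℝ} (hθ : 0 ≤ θ) (hr : 1 ≤ r) (h0 : 0 ≤ χ 0)
    (hχ : ∀ t ∈ Icc 0 1, HasDerivAt χ (ψ t) t) (hsq : ∀ t ∈ Icc 0 1, χ t ^ 2 ≤ θ * ψ t)
    (hψ : ∀ t ∈ Icc 0 (1 / (2 * r)), r ^ 2 * (1 - t * r) ^ 2 ≤ ψ t) :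
    r < 4 * θ + 1 := by
  have ht₀ : 1 / (2 * r) ≤ 1 := by rw [div_le_one (by positivity)]; linarith
  have hinit : Icc 0 (1 / (2 * r)) ⊆ Icc 0 1 := Icc_subset_Icc_right ht₀
  have hrest : Icc (1 / (2 * r)) 1 ⊆ Icc 0 1 := Icc_subset_Icc_left (by positivity)
  have hlow := seven_mul_div_le_of_sq_mul_one_sub_sq_le_deriv (by positivity) h0
    (fun t ht => hχ t (hinit ht)) hψ
  have hblow := mul_sub_lt_of_sq_le_mul_deriv hθ ht₀ (fun t ht => hχ t (hrest ht))
    (fun t ht => hsq t (hrest ht)) (lt_of_lt_of_le (by positivity) hlow)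
  have hlow' := mul_le_mul_of_nonneg_right hlow (sub_nonneg.2 ht₀)
  have hcalc : 7 * r / 24 * (1 - 1 / (2 * r)) = 7 * r / 24 - 7 / 48 := by
    field_simp; ring
  linarith

end Interval

lemma quadForm_mul_one_sub_sq_le_quadForm_add_smul {n : ℕ}
    {H : (Fin n → ℝ) → Matrix (Fin n) (Fin n) ℝ} {x v : Fin n → ℝ} (hHx : (H x).PosDef)
    (hdikin : ∀ y : Fin n → ℝ, quadForm (H x) (y - x) < 1 → ∀ v : Fin n → ℝ, v ≠ 0 →
      1 - √(quadForm (H x) (y - x)) ≤ √(quadForm (H y) v) / √(quadForm (H x) v))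
    (hv : v ≠ 0) {t : ℝ} (ht : 0 ≤ t) (htr : t * √(quadForm (H x) v) < 1) :
    quadForm (H x) v * (1 - t * √(quadForm (H x) v)) ^ 2 ≤ quadForm (H (x + t • v)) v := by
  set r := √(quadForm (H x) v)
  have hr2 : r ^ 2 = quadForm (H x) v := Real.sq_sqrt (quadForm_nonneg hHx.posSemidef v)
  have hr : 0 < r := Real.sqrt_pos.2 (quadForm_pos hHx hv)
  have hdist : quadForm (H x) (x + t • v - x) = (t * r) ^ 2 := by
    rw [add_sub_cancel_left, quadForm_smul, mul_pow, hr2]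
  have hlow := hdikin _ (by rw [hdist]; nlinarith [mul_nonneg ht hr.le]) v hv
  rw [hdist, Real.sqrt_sq (mul_nonneg ht hr.le), le_div_iff₀ hr] at hlow
  have hψ : 0 < quadForm (H (x + t • v)) v :=
    Real.sqrt_pos.1 ((mul_pos (by linarith) hr).trans_le hlow)
  calc quadForm (H x) v * (1 - t * r) ^ 2 = ((1 - t * r) * r) ^ 2 := by rw [← hr2]; ring
    _ ≤ √(quadForm (H (x + t • v)) v) ^ 2 := pow_le_pow_left₀ (by nlinarith) hlow 2
    _ = quadForm (H (x + t • v)) v := Real.sq_sqrt hψ.le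

lemma sqrt_quadForm_lt_of_dotProduct_sub_nonneg {n : ℕ} {D : Set (Fin n → ℝ)}
    {g : (Fin n → ℝ) → (Fin n → ℝ)} {H : (Fin n → ℝ) → Matrix (Fin n) (Fin n) ℝ} {θ : ℝ}
    (hconv : Convex ℝ D)
    (hHess : ∀ x ∈ D, ∀ v w : Fin n → ℝ,
      fderiv ℝ (fun y => g y ⬝ᵥ v) x w = v ⬝ᵥ (H x *ᵥ w))
    (hposdef : ∀ x ∈ D, (H x).PosDef)
    (hdikin : ∀ x ∈ D, ∀ y : Fin n → ℝ, quadForm (H x) (y - x) < 1 → ∀ v : Fin n → ℝ, v ≠ 0 →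
      1 - √(quadForm (H x) (y - x)) ≤ √(quadForm (H y) v) / √(quadForm (H x) v))
    (hθ : ∀ x ∈ D, quadForm (H x) ((H x)⁻¹ *ᵥ g x) ≤ θ)
    {x y : Fin n → ℝ} (hx : x ∈ D) (hy : y ∈ D) (hxy : 0 ≤ g x ⬝ᵥ (y - x)) :
    √(quadForm (H x) (y - x)) < 4 * θ + 1 := by
  have hθ₀ : 0 ≤ θ := (quadForm_nonneg (hposdef x hx).posSemidef _).trans (hθ x hx)
  set v := y - x
  set r := √(quadForm (H x) v)
  rcases lt_or_ge r 1 with hr | hr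
  · linarith
  have hv : v ≠ 0 := by
    rintro hv
    norm_num [r, hv, quadForm] at hr
  have hseg : ∀ t ∈ Icc (0 : ℝ) 1, x + t • v ∈ D := fun t ht =>
    hconv.add_smul_sub_mem hx hy ht
  refine lt_four_mul_add_one_of_sq_le_mul_deriv (χ := fun t => g (x + t • v) ⬝ᵥ v)
    (ψ := fun t => quadForm (H (x + t • v)) v) hθ₀ hr (by simpa using hxy) (fun t ht => ?_)
    (fun t ht => ?_) (fun t ht => ?_)
  · have hderiv := hHess _ (hseg t ht) v v
    have hne : fderiv ℝ (fun y => g y ⬝ᵥ v) (x + t • v) v ≠ 0 := by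
      rw [hderiv]; exact (quadForm_pos (hposdef _ (hseg t ht)) hv).ne'
    have h := hasDerivAt_comp_add_smul_of_fderiv_ne_zero hne
    rwa [hderiv] at h
  · set z := x + t • v
    have hHz := hposdef z (hseg t ht)
    calc (g z ⬝ᵥ v) ^ 2 ≤ quadForm (H z) v * quadForm (H z) ((H z)⁻¹ *ᵥ g z) :=
          sq_dotProduct_le_quadForm_mul_quadForm_inv hHz v _
      _ ≤ quadForm (H z) v * θ :=
          mul_le_mul_of_nonneg_left (hθ z (hseg t ht)) (quadForm_nonneg hHz.posSemidef v)
      _ = θ * quadForm (H z) v := mul_comm _ _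
  · have htr : t * r < 1 := by
      have := (le_div_iff₀ (by positivity : (0 : ℝ) < 2 * r)).1 ht.2
      linarith
    rw [Real.sq_sqrt (quadForm_nonneg (hposdef x hx).posSemidef v)]
    exact quadForm_mul_one_sub_sq_le_quadForm_add_smul (hposdef x hx) (hdikin x hx) hv ht.1 htr

theorem stmt4_general (n : ℕ) (D : Set (Fin n → ℝ))
    (g : (Fin n → ℝ) → (Fin n → ℝ))
    (H : (Fin n → ℝ) → Matrix (Fin n) (Fin n) ℝ)
    (θ : ℝ)
    (hconv : Convex ℝ D)
    (hDpos : ∀ x ∈ D, ∀ i, 0 < x i)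
    (hHess : ∀ x ∈ D, ∀ v w : Fin n → ℝ,
      fderiv ℝ (fun y => dotProduct (g y) v) x w = dotProduct v ((H x).mulVec w))
    (hposdef : ∀ x ∈ D, (H x).PosDef)
    (hsc1 : ∀ x ∈ D, ∀ y : Fin n → ℝ, quadForm (H x) (y - x) < 1 → y ∈ D)
    (hsc2 : ∀ x ∈ D, ∀ y : Fin n → ℝ, quadForm (H x) (y - x) < 1 →
      ∀ v : Fin n → ℝ, v ≠ 0 →
        1 - Real.sqrt (quadForm (H x) (y - x)) ≤
            Real.sqrt (quadForm (H y) v) / Real.sqrt (quadForm (H x) v) ∧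
        Real.sqrt (quadForm (H y) v) / Real.sqrt (quadForm (H x) v) ≤
            1 / (1 - Real.sqrt (quadForm (H x) (y - x))))
    (hθ : ∀ x ∈ D, quadForm (H x) ((H x)⁻¹.mulVec (g x)) ≤ θ)
    (K : ℝ) (hK : K = 4 * θ + 1)
    (x : Fin n → ℝ) (hx : x ∈ D)
    (hx1 : ∀ i : Fin n, x + ((K + 1) * x i) • (Pi.single i 1 : Fin n → ℝ) ∈ D)
    :
    ∀ i : Fin n, g x i < 0 := by
  intro i
  by_contra! hgi
  have hθ₀ : 0 ≤ θ := (quadForm_nonneg (hposdef x hx).posSemidef _).trans (hθ x hx)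
  have hK₁ : 0 < K + 1 := by linarith
  have hnear := sqrt_quadForm_lt_of_dotProduct_sub_nonneg hconv hHess hposdef
    (fun z hz y hy v hv => (hsc2 z hz y hy v hv).1) hθ hx (hx1 i)
    (by simpa using mul_nonneg (mul_nonneg hK₁.le (hDpos x hx i).le) hgi)
  have hfar : K + 1 ≤ √(quadForm (H x) (x + ((K + 1) * x i) • Pi.single i 1 - x)) := by
    have hcoord := one_le_quadForm_smul_single i (fun y hy => hDpos y (hsc1 x hx y hy) i)
    rw [add_sub_cancel_left, mul_smul, quadForm_smul, Real.le_sqrt' hK₁]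
    exact le_mul_of_one_le_right (sq_nonneg _) hcoord
  linarith

/-- for a ϑ-self-concordant barrier with domain in the positive orthant,
at a point `x` with `x + (K+1)xᵢeᵢ ∈ D` for all `i` (`K = 4ϑ+1`), all components of the
gradient are negative. -/
theorem stmt4 (n : ℕ) (D : Set (Fin n → ℝ)) (f : (Fin n → ℝ) → ℝ)
    (g : (Fin n → ℝ) → (Fin n → ℝ))
    (H : (Fin n → ℝ) → Matrix (Fin n) (Fin n) ℝ)
    (θ : ℝ)
    (hopen : IsOpen D) (hconv : Convex ℝ D)
    (hDpos : ∀ x ∈ D, ∀ i, 0 < x i)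
    (hf : ContDiffOn ℝ 2 f D)
    (hgrad : ∀ x ∈ D, ∀ v : Fin n → ℝ, fderiv ℝ f x v = dotProduct (g x) v)
    (hHess : ∀ x ∈ D, ∀ v w : Fin n → ℝ,
      fderiv ℝ (fun y => dotProduct (g y) v) x w = dotProduct v ((H x).mulVec w))
    (hposdef : ∀ x ∈ D, (H x).PosDef)
    (hsc1 : ∀ x ∈ D, ∀ y : Fin n → ℝ, quadForm (H x) (y - x) < 1 → y ∈ D)
    (hsc2 : ∀ x ∈ D, ∀ y : Fin n → ℝ, quadForm (H x) (y - x) < 1 →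
      ∀ v : Fin n → ℝ, v ≠ 0 →
        1 - Real.sqrt (quadForm (H x) (y - x)) ≤
            Real.sqrt (quadForm (H y) v) / Real.sqrt (quadForm (H x) v) ∧
        Real.sqrt (quadForm (H y) v) / Real.sqrt (quadForm (H x) v) ≤
            1 / (1 - Real.sqrt (quadForm (H x) (y - x))))
    (hθ : ∀ x ∈ D, quadForm (H x) ((H x)⁻¹.mulVec (g x)) ≤ θ)
    (K : ℝ) (hK : K = 4 * θ + 1)
    (x : Fin n → ℝ) (hx : x ∈ D)
    (hx1 : ∀ i : Fin n, x + ((K + 1) * x i) • (Pi.single i 1 : Fin n → ℝ) ∈ D)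
    :
    ∀ i : Fin n, g x i < 0 :=
  stmt4_general n D g H θ hconv hDpos hHess hposdef hsc1 hsc2 hθ K hK x hx hx1
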